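/- Let I be a facet of a subword complex SC(Q,ρ) on a finite Coxeter system. Then the root function r(I,·) : k ↦ Π Q_{[k−1]∖I} (α_{q_k}) restricts to a bijection from the complement of I in [m] onto the inversion set of ρ. -/

import Mathlib

/-!
Listing the complement of `I` in increasing order gives a reduced word `a₁ ⋯ a_ℓ` of simple
roots with product `ρ`, and `r(I, kᵢ) = s_{a₁} ⋯ s_{a_{i-1}}(aᵢ)` is its root sequence.
Since `s_a` permutes `Φ⁺ ∖ {a}`, one has `inv(s_a w) = {a} ∪ s_a(inv w)` as soon as
`w⁻¹(a) > 0`, and for a reduced word `a :: L` this positivity follows from the strong exchange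
property. Induction on the word then shows that the root sequence of a reduced word enumerates
`inv(ρ)` without repetitions.
-/

open scoped RealInnerProductSpace

variable {V : Type*} [NormedAddCommGroup V] [InnerProductSpace ℝ V] [FiniteDimensional ℝ V]

/-- The orthogonal reflection interchanging `v` and `-v` and fixing the hyperplane `v^⊥`
pointwise (reflection through the subspace `(ℝ∙v)ᗮ`). -/
noncomputable def reflAlong (v : V) : V ≃ₗᵢ[ℝ] V :=
  Submodule.reflection (Submodule.span ℝ {v})ᗮ

/-- A finite (essential) reflection group on a Euclidean vector space, together with a
root system and a generic linear functional selecting the positive roots.  This is the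
setting of a finite Coxeter system realized geometrically. -/
structure FiniteRootSystem (V : Type*) [NormedAddCommGroup V] [InnerProductSpace ℝ V]
    [FiniteDimensional ℝ V] where
  /-- The reflection group `W`, a subgroup of the orthogonal group. -/
  W : Subgroup (V ≃ₗᵢ[ℝ] V)
  /-- `W` is finite. -/
  finW : Finite W
  /-- The root system `Φ`. -/
  Φ : Set V
  ne_zero : ∀ β ∈ Φ, β ≠ 0
  /-- `Φ` is stable under the action of `W`. -/
  stable : ∀ w ∈ W, ∀ β ∈ Φ, w β ∈ Φ
  /-- `Φ` contains two opposite roots orthogonal to each reflection hyperplane. -/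
  neg_mem : ∀ β ∈ Φ, -β ∈ Φ
  smul_mem : ∀ β ∈ Φ, ∀ c : ℝ, c • β ∈ Φ → c = 1 ∨ c = -1
  refl_mem : ∀ β ∈ Φ, reflAlong β ∈ W
  refl_surj : ∀ g ∈ W, (∃ v : V, v ≠ 0 ∧ g = reflAlong v) → ∃ β ∈ Φ, g = reflAlong β
  /-- `W` is generated by the reflections along the roots. -/
  gen : W = Subgroup.closure {g | ∃ β ∈ Φ, g = reflAlong β}
  /-- The intersection of the reflecting hyperplanes is reduced to `0`. -/
  essential : ∀ v : V, (∀ β ∈ Φ, ⟪β, v⟫ = 0) → v = 0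
  /-- A linear functional not vanishing on any root, splitting `Φ` into positive and
  negative roots. -/
  f : V →ₗ[ℝ] ℝ
  f_ne : ∀ β ∈ Φ, f β ≠ 0

namespace FiniteRootSystem

variable (R : FiniteRootSystem V)

/-- The positive roots. -/
def PosRoots : Set V := {β ∈ R.Φ | 0 < R.f β}

/-- The negative roots. -/
def NegRoots : Set V := {β ∈ R.Φ | R.f β < 0}

/-- The cone generated by the positive roots. -/
def InPosCone (v : V) : Prop :=
  ∃ (s : Finset V) (c : V → ℝ), ↑s ⊆ R.PosRoots ∧ (∀ x ∈ s, 0 ≤ c x) ∧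
    v = ∑ x ∈ s, c x • x

/-- The simple roots: the roots lying on the extremal rays of the cone generated by the
positive roots. -/
def IsSimpleRoot (β : V) : Prop :=
  β ∈ R.PosRoots ∧
    ∀ x y : V, R.InPosCone x → R.InPosCone y → β = x + y → ∃ a : ℝ, 0 ≤ a ∧ x = a • β

/-- The inversion set `inv(w) = Φ⁺ ∩ w(Φ⁻)` of `w`: the positive roots sent to negative
roots by `w⁻¹`. -/
def invSet (w : V ≃ₗᵢ[ℝ] V) : Set V :=
  {β ∈ R.PosRoots | w.symm β ∈ R.NegRoots}

/-- The length of `w`: the smallest number of simple reflections needed to write `w`. -/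
noncomputable def len (w : V ≃ₗᵢ[ℝ] V) : ℕ :=
  sInf {n | ∃ L : List V, L.length = n ∧ (∀ β ∈ L, R.IsSimpleRoot β) ∧
    (L.map reflAlong).prod = w}

end FiniteRootSystem

section SubwordComplex

open FiniteRootSystem

variable {V : Type*} [NormedAddCommGroup V] [InnerProductSpace ℝ V] [FiniteDimensional ℝ V]

/-- The product of the reflections of the letters of the word `Q` at the positions in `X`,
taken in increasing order of positions. -/
noncomputable def prodQ {m : ℕ} (Q : Fin m → V) (X : Finset (Fin m)) : V ≃ₗᵢ[ℝ] V :=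
  ((X.sort (· ≤ ·)).map (fun k => reflAlong (Q k))).prod

/-- A facet of the subword complex `SC(Q, ρ)`: a set of positions whose complement forms
a reduced expression for `ρ` as a subword of `Q`.  Here the word `Q` is recorded by the
simple roots of its letters, the corresponding simple reflections being `reflAlong (Q k)`. -/
def IsSCFacet (R : FiniteRootSystem V) {m : ℕ} (Q : Fin m → V) (ρ : V ≃ₗᵢ[ℝ] V)
    (I : Finset (Fin m)) : Prop :=
  prodQ Q Iᶜ = ρ ∧ Iᶜ.card = R.len ρ

/-- The root function of a facet `I`: `r(I, k) = Π Q_{[k−1]∖I} (α_{q_k})`. -/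
noncomputable def rootf {m : ℕ} (Q : Fin m → V) (I : Finset (Fin m)) (k : Fin m) : V :=
  prodQ Q (Finset.univ.filter (fun x => x < k ∧ x ∉ I)) (Q k)

end SubwordComplex

theorem Finset.sort_filter {α : Type*} [LinearOrder α] (s : Finset α) (p : α → Prop)
    [DecidablePred p] : (s.filter p).sort (· ≤ ·) = (s.sort (· ≤ ·)).filter p := by
  refine List.Pairwise.eq_of_mem_iff (r := (· < ·)) (Finset.sortedLT_sort _).pairwise
    ((Finset.sortedLT_sort s).pairwise.filter _) fun a => ?_
  simp

theorem List.bijOn_of_nodup_map {α β : Type*} {f : α → β} {l : List α} (hl : (l.map f).Nodup) :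
    Set.BijOn f {x | x ∈ l} {y | y ∈ l.map f} :=
  ⟨fun _ hx => List.mem_map_of_mem hx, fun _ hx _ hy => List.inj_on_of_nodup_map hl hx hy,
    fun _ hy => List.mem_map.mp hy⟩

section Reflections

variable {E : Type*} [NormedAddCommGroup E] [InnerProductSpace ℝ E]

theorem reflAlong_apply (v x : E) : reflAlong v x = x - (2 * ⟪v, x⟫ / ⟪v, v⟫) • v := by
  rw [reflAlong, Submodule.reflection_apply, Submodule.starProjection_orthogonal_val,
    Submodule.starProjection_singleton, real_inner_self_eq_norm_sq]
  simp only [RCLike.ofReal_real_eq_id, id_eq]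
  match_scalars <;> ring

theorem reflAlong_self (v : E) : reflAlong v v = -v :=
  Submodule.reflection_orthogonalComplement_singleton_eq_neg v

@[simp]
theorem reflAlong_symm (v : E) : (reflAlong v).symm = reflAlong v :=
  Submodule.reflection_symm

@[simp]
theorem reflAlong_reflAlong (v x : E) : reflAlong v (reflAlong v x) = x :=
  Submodule.reflection_reflection _ x

theorem reflAlong_mul_self (v : E) : reflAlong v * reflAlong v = 1 := by
  ext x
  exact reflAlong_reflAlong v x

theorem reflAlong_map (g : E ≃ₗᵢ[ℝ] E) (v : E) :
    reflAlong (g v) = g * reflAlong v * g⁻¹ := by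
  ext x
  change reflAlong (g v) x = g (reflAlong v (g.symm x))
  rw [reflAlong_apply, reflAlong_apply, map_sub, map_smul, g.apply_symm_apply,
    ← g.inner_map_map v (g.symm x), g.apply_symm_apply, ← g.inner_map_map v v]

theorem symm_reflAlong_mul_apply (v : E) (w : E ≃ₗᵢ[ℝ] E) (x : E) :
    (reflAlong v * w).symm x = w.symm (reflAlong v x) := by
  simp [LinearIsometryEquiv.mul_def]

noncomputable def reflProd (L : List E) : E ≃ₗᵢ[ℝ] E := (L.map reflAlong).prod

@[simp]
theorem reflProd_nil : reflProd ([] : List E) = 1 := rfl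

@[simp]
theorem reflProd_cons (a : E) (L : List E) : reflProd (a :: L) = reflAlong a * reflProd L := by
  simp [reflProd]

/-- The root sequence of a word: its `n`-th entry is `s_{L₀} ⋯ s_{L_{n-1}} (Lₙ)`. -/
noncomputable def inversionSeq : List E → List E
  | [] => []
  | a :: L => a :: (inversionSeq L).map (reflAlong a)

@[simp]
theorem inversionSeq_nil : inversionSeq ([] : List E) = [] := rfl

@[simp]
theorem inversionSeq_cons (a : E) (L : List E) :
    inversionSeq (a :: L) = a :: (inversionSeq L).map (reflAlong a) := rfl

theorem map_reflProd_filter_eq_inversionSeq {α : Type*} [LinearOrder α] (Q : α → E)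
    {l : List α} (hl : l.Pairwise (· < ·)) :
    l.map (fun k => reflProd ((l.filter (· < k)).map Q) (Q k)) = inversionSeq (l.map Q) := by
  induction l with
  | nil => rfl
  | cons k₀ l ih =>
    obtain ⟨hk₀, hl⟩ := List.pairwise_cons.mp hl
    have head : (k₀ :: l).filter (· < k₀) = [] := by
      simpa using fun k hk => (hk₀ k hk).le
    have tail (k : α) (hk : k ∈ l) : (k₀ :: l).filter (· < k) = k₀ :: l.filter (· < k) := by
      simp [hk₀ k hk]
    simp only [List.map_cons, head, inversionSeq_cons, ← ih hl, List.map_map]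
    congr 1
    refine List.map_congr_left fun k hk => ?_
    simp [tail k hk]

theorem prodQ_eq_reflProd {m : ℕ} (Q : Fin m → E) (X : Finset (Fin m)) :
    prodQ Q X = reflProd ((X.sort (· ≤ ·)).map Q) := by
  simp [prodQ, reflProd, List.map_map, Function.comp_def]

theorem rootf_eq_reflProd {m : ℕ} (Q : Fin m → E) (I : Finset (Fin m)) (k : Fin m) :
    rootf Q I k = reflProd (((Iᶜ.sort (· ≤ ·)).filter (· < k)).map Q) (Q k) := by
  have : Finset.univ.filter (fun x => x < k ∧ x ∉ I) = Iᶜ.filter (· < k) := by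
    ext x
    simp [and_comm]
  rw [rootf, this, prodQ_eq_reflProd, Finset.sort_filter]

end Reflections

namespace FiniteRootSystem

variable (R : FiniteRootSystem V)

theorem mem_posRoots_or_mem_negRoots {β : V} (h : β ∈ R.Φ) : β ∈ R.PosRoots ∨ β ∈ R.NegRoots :=
  (R.f_ne β h).lt_or_gt.symm.imp (⟨h, ·⟩) (⟨h, ·⟩)

theorem disjoint_posRoots_negRoots : Disjoint R.PosRoots R.NegRoots :=
  Set.disjoint_left.mpr fun _ hpos hneg => hpos.2.not_gt hneg.2

theorem neg_mem_negRoots {β : V} (h : β ∈ R.PosRoots) : -β ∈ R.NegRoots :=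
  ⟨R.neg_mem β h.1, by simpa using h.2⟩

theorem neg_mem_posRoots {β : V} (h : β ∈ R.NegRoots) : -β ∈ R.PosRoots :=
  ⟨R.neg_mem β h.1, by simpa using h.2⟩

theorem inPosCone_smul {x : V} (hx : x ∈ R.PosRoots) {c : ℝ} (hc : 0 ≤ c) :
    R.InPosCone (c • x) :=
  ⟨{x}, fun _ => c, by simpa using hx, fun _ _ => hc, by simp⟩

variable {R} in
theorem IsSimpleRoot.eq_of_add_eq_smul {β γ δ : V} {c : ℝ} (hβ : R.IsSimpleRoot β)
    (hγ : γ ∈ R.PosRoots) (hδ : δ ∈ R.PosRoots) (hsum : γ + δ = c • β) : γ = β := by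
  have hc : 0 < c := by
    have hf : R.f γ + R.f δ = c * R.f β := by rw [← map_add, hsum, map_smul, smul_eq_mul]
    exact pos_of_mul_pos_left (hf ▸ add_pos hγ.2 hδ.2) hβ.1.2.le
  have hdecomp : β = c⁻¹ • γ + c⁻¹ • δ := by
    rw [← smul_add, hsum, inv_smul_smul₀ hc.ne']
  obtain ⟨a, ha, hγa⟩ := hβ.2 _ _ (R.inPosCone_smul hγ (inv_nonneg.mpr hc.le))
    (R.inPosCone_smul hδ (inv_nonneg.mpr hc.le)) hdecomp
  have hγβ : γ = (c * a) • β := by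
    rw [mul_smul, ← hγa, smul_inv_smul₀ hc.ne']
  rcases R.smul_mem β hβ.1.1 (c * a) (hγβ ▸ hγ.1) with h | h
  · rw [hγβ, h, one_smul]
  · nlinarith [mul_nonneg hc.le ha]

theorem reflAlong_mem_posRoots {β γ : V} (hβ : R.IsSimpleRoot β) (hγ : γ ∈ R.PosRoots)
    (hne : γ ≠ β) : reflAlong β γ ∈ R.PosRoots := by
  have hΦ : reflAlong β γ ∈ R.Φ := R.stable _ (R.refl_mem β hβ.1.1) γ hγ.1
  refine (R.mem_posRoots_or_mem_negRoots hΦ).resolve_right fun hneg => hne ?_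
  refine hβ.eq_of_add_eq_smul hγ (R.neg_mem_posRoots hneg) (c := 2 * ⟪β, γ⟫ / ⟪β, β⟫) ?_
  rw [reflAlong_apply]
  abel

theorem reflProd_mem_W {L : List V} (hL : ∀ β ∈ L, β ∈ R.Φ) : reflProd L ∈ R.W := by
  induction L with
  | nil => exact R.W.one_mem
  | cons a L ih =>
    rw [reflProd_cons]
    exact R.W.mul_mem (R.refl_mem a (hL a List.mem_cons_self))
      (ih fun β hβ => hL β (List.mem_cons_of_mem a hβ))

theorem invSet_one : R.invSet 1 = ∅ :=
  Set.eq_empty_of_forall_notMem fun _ h =>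
    Set.disjoint_left.mp R.disjoint_posRoots_negRoots h.1 h.2

theorem reflAlong_mem_invSet_of_mem_invSet_reflAlong_mul {a δ : V} {w : V ≃ₗᵢ[ℝ] V}
    (ha : R.IsSimpleRoot a) (hδ : δ ∈ R.invSet (reflAlong a * w)) (hne : δ ≠ a) :
    reflAlong a δ ∈ R.invSet w :=
  ⟨R.reflAlong_mem_posRoots ha hδ.1 hne, by simpa [symm_reflAlong_mul_apply] using hδ.2⟩

theorem invSet_reflAlong_mul {a : V} {w : V ≃ₗᵢ[ℝ] V} (ha : R.IsSimpleRoot a)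
    (hw : w.symm a ∈ R.PosRoots) :
    R.invSet (reflAlong a * w) = insert a (reflAlong a '' R.invSet w) := by
  ext β
  constructor
  · intro hβ
    by_cases hne : β = a
    · exact Or.inl hne
    · exact Or.inr ⟨reflAlong a β,
        R.reflAlong_mem_invSet_of_mem_invSet_reflAlong_mul ha hβ hne, reflAlong_reflAlong a β⟩
  · rintro (rfl | ⟨γ, hγ, rfl⟩)
    · refine ⟨ha.1, ?_⟩
      rw [symm_reflAlong_mul_apply, reflAlong_self, map_neg]
      exact R.neg_mem_negRoots hw
    · have hγa : γ ≠ a := by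
        rintro rfl
        exact Set.disjoint_left.mp R.disjoint_posRoots_negRoots hw hγ.2
      refine ⟨R.reflAlong_mem_posRoots ha hγ.1 hγa, ?_⟩
      rw [symm_reflAlong_mul_apply, reflAlong_reflAlong]
      exact hγ.2

/-- The strong exchange property. -/
theorem exists_reflAlong_mul_reflProd_eq {L : List V} (hL : ∀ β ∈ L, R.IsSimpleRoot β)
    {δ : V} (hδ : δ ∈ R.invSet (reflProd L)) :
    ∃ M : List V, (∀ β ∈ M, R.IsSimpleRoot β) ∧ M.length + 1 = L.length ∧
      reflAlong δ * reflProd L = reflProd M := by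
  induction L generalizing δ with
  | nil => simp [R.invSet_one] at hδ
  | cons b L ih =>
    obtain ⟨hb, hL'⟩ := List.forall_mem_cons.mp hL
    rw [reflProd_cons] at hδ ⊢
    by_cases hne : δ = b
    · refine ⟨L, hL', rfl, ?_⟩
      rw [hne, ← mul_assoc, reflAlong_mul_self, one_mul]
    · obtain ⟨M, hM, hMlen, hMeq⟩ :=
        ih hL' (R.reflAlong_mem_invSet_of_mem_invSet_reflAlong_mul hb hδ hne)
      refine ⟨b :: M, List.forall_mem_cons.mpr ⟨hb, hM⟩, by simpa using hMlen, ?_⟩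
      have hconj : reflAlong δ * reflAlong b = reflAlong b * reflAlong (reflAlong b δ) := by
        rw [reflAlong_map, ← mul_assoc, ← mul_assoc, reflAlong_mul_self, one_mul,
          inv_eq_of_mul_eq_one_right (reflAlong_mul_self b)]
      rw [← mul_assoc, hconj, mul_assoc, hMeq, reflProd_cons]

theorem len_reflProd_le {L : List V} (hL : ∀ β ∈ L, R.IsSimpleRoot β) :
    R.len (reflProd L) ≤ L.length :=
  Nat.sInf_le ⟨L, rfl, hL, rfl⟩

theorem exists_length_eq_len_reflProd_eq {L : List V} (hL : ∀ β ∈ L, R.IsSimpleRoot β) :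
    ∃ M : List V, (∀ β ∈ M, R.IsSimpleRoot β) ∧ M.length = R.len (reflProd L) ∧
      reflProd M = reflProd L := by
  obtain ⟨M, hMlen, hM, hMeq⟩ := Nat.sInf_mem (⟨L.length, L, rfl, hL, rfl⟩ :
    {n | ∃ M : List V, M.length = n ∧ (∀ β ∈ M, R.IsSimpleRoot β) ∧
      (M.map reflAlong).prod = reflProd L}.Nonempty)
  exact ⟨M, hM, hMlen, hMeq⟩

def IsReduced (L : List V) : Prop := R.len (reflProd L) = L.length

variable {R} in
theorem IsReduced.of_cons {a : V} {L : List V} (hL : ∀ β ∈ a :: L, R.IsSimpleRoot β)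
    (hred : R.IsReduced (a :: L)) : R.IsReduced L := by
  obtain ⟨ha, hL'⟩ := List.forall_mem_cons.mp hL
  refine (R.len_reflProd_le hL').antisymm (not_lt.mp fun hlt => ?_)
  obtain ⟨M, hM, hMlen, hMeq⟩ := R.exists_length_eq_len_reflProd_eq hL'
  have hle := R.len_reflProd_le (L := a :: M) (List.forall_mem_cons.mpr ⟨ha, hM⟩)
  rw [reflProd_cons, hMeq, ← reflProd_cons, hred] at hle
  simp only [List.length_cons] at hle
  omega

theorem symm_reflProd_apply_mem_posRoots {a : V} {L : List V}
    (hL : ∀ β ∈ a :: L, R.IsSimpleRoot β) (hred : R.IsReduced (a :: L)) :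
    (reflProd L).symm a ∈ R.PosRoots := by
  obtain ⟨ha, hL'⟩ := List.forall_mem_cons.mp hL
  have hW : (reflProd L)⁻¹ ∈ R.W := R.W.inv_mem (R.reflProd_mem_W fun β hβ => (hL' β hβ).1.1)
  refine (R.mem_posRoots_or_mem_negRoots (R.stable _ hW a ha.1.1)).resolve_right fun hneg => ?_
  obtain ⟨M, hM, hMlen, hMeq⟩ := R.exists_reflAlong_mul_reflProd_eq hL' ⟨ha.1, hneg⟩
  have hle := R.len_reflProd_le hM
  rw [← hMeq, ← reflProd_cons, hred] at hle
  simp only [List.length_cons] at hle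
  omega

theorem setOf_mem_inversionSeq {L : List V} (hL : ∀ β ∈ L, R.IsSimpleRoot β)
    (hred : R.IsReduced L) : {x | x ∈ inversionSeq L} = R.invSet (reflProd L) := by
  induction L with
  | nil => simp [R.invSet_one]
  | cons a L ih =>
    obtain ⟨ha, hL'⟩ := List.forall_mem_cons.mp hL
    rw [inversionSeq_cons, reflProd_cons,
      R.invSet_reflAlong_mul ha (R.symm_reflProd_apply_mem_posRoots hL hred),
      ← ih hL' (hred.of_cons hL)]
    ext x
    simp

theorem nodup_inversionSeq {L : List V} (hL : ∀ β ∈ L, R.IsSimpleRoot β)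
    (hred : R.IsReduced L) : (inversionSeq L).Nodup := by
  induction L with
  | nil => exact List.nodup_nil
  | cons a L ih =>
    obtain ⟨ha, hL'⟩ := List.forall_mem_cons.mp hL
    have hredL := hred.of_cons hL
    rw [inversionSeq_cons, List.nodup_cons]
    refine ⟨fun hmem => ?_, (ih hL' hredL).map (reflAlong a).injective⟩
    obtain ⟨γ, hγ, hγa⟩ := List.mem_map.mp hmem
    have hγinv : γ ∈ R.invSet (reflProd L) := by
      rw [← R.setOf_mem_inversionSeq hL' hredL]
      exact hγ
    have hγneg : γ = -a := by rw [← reflAlong_reflAlong a γ, hγa, reflAlong_self]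
    exact Set.disjoint_left.mp R.disjoint_posRoots_negRoots hγinv.1
      (hγneg ▸ R.neg_mem_negRoots ha.1)

end FiniteRootSystem

open FiniteRootSystem in
theorem rootf_bijOn_inversions_general
    {V : Type*} [NormedAddCommGroup V] [InnerProductSpace ℝ V] [FiniteDimensional ℝ V]
    (R : FiniteRootSystem V) {m : ℕ} (Q : Fin m → V) (hQ : ∀ k, R.IsSimpleRoot (Q k))
    (ρ : V ≃ₗᵢ[ℝ] V)
    (I : Finset (Fin m)) (hI : IsSCFacet R Q ρ I) :
    Set.BijOn (rootf Q I) (↑(Iᶜ) : Set (Fin m)) (R.invSet ρ) := by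
  obtain ⟨hprod, hcard⟩ := hI
  set l := Iᶜ.sort (· ≤ ·)
  have hsimple : ∀ β ∈ l.map Q, R.IsSimpleRoot β := by simp [hQ]
  have hρ : reflProd (l.map Q) = ρ := by rw [← prodQ_eq_reflProd, hprod]
  have hred : R.IsReduced (l.map Q) := by
    rw [FiniteRootSystem.IsReduced, hρ, List.length_map, Finset.length_sort, hcard]
  have hseq : l.map (rootf Q I) = inversionSeq (l.map Q) := by
    rw [funext (rootf_eq_reflProd Q I)]
    exact map_reflProd_filter_eq_inversionSeq Q (Finset.sortedLT_sort _).pairwise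
  have hbij := List.bijOn_of_nodup_map (hseq ▸ R.nodup_inversionSeq hsimple hred)
  rwa [hseq, R.setOf_mem_inversionSeq hsimple hred, hρ,
    show {x | x ∈ l} = ↑Iᶜ by ext; simp [l]] at hbij

open FiniteRootSystem in
/-- The root function of a facet restricts to a bijection from the complement of the facet
onto the inversion set of `ρ`. -/
theorem rootf_bijOn_inversions
    {V : Type*} [NormedAddCommGroup V] [InnerProductSpace ℝ V] [FiniteDimensional ℝ V]
    (R : FiniteRootSystem V) {m : ℕ} (Q : Fin m → V) (hQ : ∀ k, R.IsSimpleRoot (Q k))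
    (ρ : V ≃ₗᵢ[ℝ] V) (hρ : ρ ∈ R.W)
    (I : Finset (Fin m)) (hI : IsSCFacet R Q ρ I) :
    Set.BijOn (rootf Q I) (↑(Iᶜ) : Set (Fin m)) (R.invSet ρ) :=
  rootf_bijOn_inversions_general R Q hQ ρ I hI
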